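/- arXiv:1401.4635 — 2 statements merged into one kernel-verified Lean document; each statement's English description precedes it below -/
import Mathlib

section
/- For every positive integer k there exists a unique sequence (a_j)_{j ≥ 1} of rationals such that exp(-∑_{j≥1} a_j x^{j+1} ∂/∂x) · x = (1/k)(1+x)^k - 1/k as formal power series in ℚ[[x]]; moreover a_1 = (1-k)/2 and a_2 = (k²-1)/12. -/
/-!
Write `D = D_a`. Since `D` raises the order of a power series by one, `Dᵐ x = O(x^{m+1})`, and
the coefficient of `x^{n+2}` in `exp(D)·x` is `-a_{n+1}` (from `m = 1`) plus a polynomial in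
`a_1, …, a_n` (from `m ≥ 2`). Prescribing `exp(D)·x = x + O(x²)` is therefore a triangular
system for the `a_j`, which has exactly one solution; its first two equations give `a_1` and `a_2`.
-/

namespace Stmt5

open PowerSeries

/-- The derivation `-∑_{j≥1} a_j x^{j+1} ∂/∂x` (with `a (j-1)` = a_j), given
coefficientwise: the coefficient of xⁿ in x^{j+1}∂f/∂x is (n-j)·(coeff (n-j) f). -/
noncomputable def D (a : ℕ → ℚ) (f : PowerSeries ℚ) : PowerSeries ℚ :=
  PowerSeries.mk fun n =>
    -∑ j ∈ Finset.Icc 1 n, a (j - 1) * ((n - j : ℕ) : ℚ) * PowerSeries.coeff (n - j) f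

/-- `exp(D)·x = ∑_{m≥0} Dᵐ(x)/m!`, computed coefficientwise; terms with m > n
do not contribute to the coefficient of xⁿ, so the sum may be truncated. -/
noncomputable def expD (a : ℕ → ℚ) : PowerSeries ℚ :=
  PowerSeries.mk fun n =>
    ∑ m ∈ Finset.range (n + 1),
      ((m.factorial : ℚ))⁻¹ * PowerSeries.coeff n ((D a)^[m] (PowerSeries.X))

section CausalFixedPoint

variable {α : Type*} [Nonempty α] (H : (ℕ → α) → ℕ → α)

noncomputable def causalFixedPoint (n : ℕ) : α :=
  H (fun i => if i < n then causalFixedPoint i else Classical.arbitrary α) n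
decreasing_by assumption

theorem existsUnique_fixedPoint_of_causal
    (hH : ∀ a b n, (∀ i < n, a i = b i) → H a n = H b n) : ∃! a, H a = a := by
  refine ⟨causalFixedPoint H, funext fun n => ?_, fun b hb => funext fun n => ?_⟩
  · rw [causalFixedPoint]
    exact hH _ _ n fun i hi => by rw [if_pos hi]
  · induction n using Nat.strong_induction_on with
    | _ n ih => rw [← hb, causalFixedPoint]; exact hH _ _ n fun i hi => by rw [if_pos hi, ih i hi]

end CausalFixedPoint

variable (a b : ℕ → ℚ)

theorem coeff_D (f : PowerSeries ℚ) (n : ℕ) :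
    coeff n (D a f) = -∑ j ∈ Finset.Icc 1 n, a (j - 1) * ((n - j : ℕ) : ℚ) * coeff (n - j) f :=
  coeff_mk _ _

theorem X_pow_succ_dvd_D {f : PowerSeries ℚ} {r : ℕ} (hf : X ^ r ∣ f) : X ^ (r + 1) ∣ D a f := by
  rw [X_pow_dvd_iff] at hf ⊢
  intro u hu
  rw [coeff_D, neg_eq_zero]
  refine Finset.sum_eq_zero fun j hj => ?_
  rw [Finset.mem_Icc] at hj
  rw [hf (u - j) (by omega), mul_zero]

theorem X_pow_succ_dvd_iterate_D_X (m : ℕ) : X ^ (m + 1) ∣ (D a)^[m] X := by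
  induction m with
  | zero => simp
  | succ m ih => rw [Function.iterate_succ_apply']; exact X_pow_succ_dvd_D a ih

theorem coeff_iterate_D_X_of_le {m n : ℕ} (h : n ≤ m) : coeff n ((D a)^[m] X) = 0 :=
  X_pow_dvd_iff.mp (X_pow_succ_dvd_iterate_D_X a m) n (Nat.lt_succ_of_le h)

theorem D_X : D a X = -(X ^ 2 * mk a) := by
  ext n
  rw [coeff_D, map_neg, coeff_X_pow_mul', neg_inj]
  split_ifs with hn
  · rw [Finset.sum_eq_single (n - 1)]
    · rw [show n - (n - 1) = 1 by omega, coeff_X, if_pos rfl, show n - 1 - 1 = n - 2 by omega,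
        coeff_mk]
      norm_num
    · intro j hj hne
      rw [coeff_X, if_neg (by omega), mul_zero]
    · intro h
      simp only [Finset.mem_Icc] at h
      omega
  · refine Finset.sum_eq_zero fun j hj => ?_
    rw [Finset.mem_Icc] at hj
    rw [coeff_X, if_neg (by omega), mul_zero]

theorem coeff_iterate_D_X_congr (m : ℕ) {n : ℕ} (hab : ∀ i, i + m + 1 ≤ n → a i = b i) :
    coeff n ((D a)^[m] X) = coeff n ((D b)^[m] X) := by
  induction m generalizing n with
  | zero => rfl
  | succ m ih =>
    simp only [Function.iterate_succ_apply', coeff_D, neg_inj]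
    refine Finset.sum_congr rfl fun j hj => ?_
    rw [Finset.mem_Icc] at hj
    by_cases hjn : n - j ≤ m
    · rw [coeff_iterate_D_X_of_le a hjn, coeff_iterate_D_X_of_le b hjn, mul_zero, mul_zero]
    · rw [hab (j - 1) (by omega), ih fun i hi => hab i (by omega)]

noncomputable def expDTail (n : ℕ) : ℚ :=
  ∑ m ∈ Finset.range (n + 1), ((m + 2).factorial : ℚ)⁻¹ * coeff (n + 2) ((D a)^[m + 2] X)

theorem expDTail_congr {n : ℕ} (hab : ∀ i < n, a i = b i) : expDTail a n = expDTail b n :=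
  Finset.sum_congr rfl fun m _ => by
    rw [coeff_iterate_D_X_congr a b (m + 2) fun i hi => hab i (by omega)]

theorem coeff_zero_expD : coeff 0 (expD a) = 0 := by
  simp [expD]

theorem coeff_one_expD : coeff 1 (expD a) = 1 := by
  simp [expD, Finset.sum_range_succ, D_X, coeff_X_pow_mul']

theorem coeff_add_two_expD (n : ℕ) : coeff (n + 2) (expD a) = -a n + expDTail a n := by
  rw [expD, coeff_mk, Finset.sum_range_succ', Finset.sum_range_succ', Function.iterate_one,
    Function.iterate_zero_apply, D_X, map_neg, coeff_X_pow_mul, coeff_mk, coeff_X,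
    if_neg (by omega)]
  simp only [expDTail, zero_add, Nat.factorial_one, Nat.factorial_zero, Nat.cast_one, inv_one]
  ring

theorem expD_eq_iff (g : PowerSeries ℚ) :
    expD a = g ↔ coeff 0 g = 0 ∧ coeff 1 g = 1 ∧ ∀ n, a n = expDTail a n - coeff (n + 2) g := by
  constructor
  · rintro rfl
    refine ⟨coeff_zero_expD a, coeff_one_expD a, fun n => ?_⟩
    rw [coeff_add_two_expD]
    ring
  · rintro ⟨h0, h1, h⟩
    ext (_ | _ | n)
    · rw [coeff_zero_expD, h0]
    · rw [coeff_one_expD, h1]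
    · rw [coeff_add_two_expD, h n]
      ring

theorem existsUnique_expD_eq {g : PowerSeries ℚ} (h0 : coeff 0 g = 0) (h1 : coeff 1 g = 1) :
    ∃! a, expD a = g := by
  simp only [expD_eq_iff, h0, h1, true_and]
  convert existsUnique_fixedPoint_of_causal (fun a n => expDTail a n - coeff (n + 2) g)
    (fun a b n hab => by rw [expDTail_congr a b hab]) using 3
  rw [eq_comm, funext_iff]

theorem expDTail_zero : expDTail a 0 = 0 := by
  rw [expDTail, Finset.sum_range_one, coeff_iterate_D_X_of_le a (by norm_num), mul_zero]

theorem expDTail_one : expDTail a 1 = a 0 ^ 2 := by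
  have hD2 : coeff 3 ((D a)^[2] X) = 2 * a 0 ^ 2 := by
    simp [coeff_D, D_X, Finset.sum_Icc_succ_top, coeff_X_pow_mul']
    ring
  rw [expDTail, Finset.sum_range_succ, Finset.sum_range_one, hD2,
    coeff_iterate_D_X_of_le a (by norm_num : 3 ≤ 3), mul_zero, add_zero]
  norm_num [Nat.factorial]
  ring

theorem coeff_one_add_X_pow {R : Type*} [Semiring R] (n j : ℕ) :
    coeff j ((1 + X : PowerSeries R) ^ n) = n.choose j := by
  rw [← Polynomial.coeff_one_add_X_pow R, ← Polynomial.coeff_coe]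
  simp

theorem coeff_succ_normalized_one_add_X_pow (n j : ℕ) :
    coeff (j + 1) (C ((n + 1 : ℕ) : ℚ)⁻¹ * (1 + X) ^ (n + 1) - C ((n + 1 : ℕ) : ℚ)⁻¹) =
      (n.choose j : ℚ) / (j + 1) := by
  rw [map_sub, coeff_C_mul, coeff_one_add_X_pow, coeff_C, if_neg j.succ_ne_zero, sub_zero,
    eq_div_iff (by positivity)]
  have h := congrArg (Nat.cast : ℕ → ℚ) (Nat.add_one_mul_choose_eq n j)
  push_cast at h ⊢
  rw [mul_assoc, ← h, inv_mul_cancel_left₀ n.cast_add_one_ne_zero]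

theorem exists_unique_sequence_for_exp_derivation (k : ℕ) (hk : 0 < k) :
    (∃! a : ℕ → ℚ,
      expD a = PowerSeries.C ((k : ℚ))⁻¹ * (1 + PowerSeries.X) ^ k
                 - PowerSeries.C ((k : ℚ))⁻¹) ∧
    (∀ a : ℕ → ℚ,
      expD a = PowerSeries.C ((k : ℚ))⁻¹ * (1 + PowerSeries.X) ^ k
                 - PowerSeries.C ((k : ℚ))⁻¹ →
      a 0 = (1 - (k : ℚ)) / 2 ∧ a 1 = ((k : ℚ)^2 - 1) / 12) := by
  obtain ⟨n, rfl⟩ := Nat.exists_eq_add_one.mpr hk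
  have hcoeff := coeff_succ_normalized_one_add_X_pow n
  refine ⟨existsUnique_expD_eq (by simp) (by simpa using hcoeff 0), fun a ha => ?_⟩
  have h2 := coeff_add_two_expD a 0
  have h3 := coeff_add_two_expD a 1
  rw [ha, hcoeff, expDTail_zero] at h2
  rw [ha, hcoeff, expDTail_one] at h3
  norm_num [Nat.cast_choose_two] at h2 h3
  have ha0 : a 0 = (1 - ((n + 1 : ℕ) : ℚ)) / 2 := by push_cast; linarith
  refine ⟨ha0, ?_⟩
  rw [ha0] at h3
  push_cast at h3 ⊢
  linear_combination h3

end Stmt5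
end

section
/- For a formal variable computation: if δ(x) = ∑_{n ∈ ℤ} x^n, then for independent commuting formal variables x_1, x_2, x_0, the identity x_0^{-1}δ((x_1-x_2)/x_0) - x_0^{-1}δ((x_2-x_1)/(-x_0)) = x_2^{-1}δ((x_1-x_0)/x_2) holds in ℂ[[x_0, x_0^{-1}, x_1, x_1^{-1}, x_2, x_2^{-1}]], where binomial expressions (x_1-x_2)^n are expanded in nonnegative integral powers of the second listed variable. -/
/- STATEMENT 15: The three-term formal delta function identity
x₀⁻¹δ((x₁-x₂)/x₀) - x₀⁻¹δ((x₂-x₁)/(-x₀)) = x₂⁻¹δ((x₁-x₀)/x₂)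
in ℂ[[x₀^{±1}, x₁^{±1}, x₂^{±1}]], with (x₁-x₂)ⁿ expanded in nonnegative
powers of x₂, (x₂-x₁)ⁿ in nonnegative powers of x₁, (x₁-x₀)ⁿ in nonnegative
powers of x₀.  A triply-indexed formal series is identified with its
coefficient function ℤ³ → ℂ, and the identity is asserted coefficientwise.
Explicitly, the coefficient of x₀ᵃx₁ᵇx₂ᶜ in x₀⁻¹δ((x₁-x₂)/x₀) =
∑_{n∈ℤ} ∑_{i≥0} C(n,i)(-1)ⁱ x₁^{n-i} x₂ⁱ x₀^{-n-1} is
(-1)ᶜ C(-a-1, c) when c ≥ 0 and a+b+c = -1, and 0 otherwise; similarly for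
the other two terms. -/

namespace Stmt15

/-- Generalized binomial coefficient C(n, i) for n ∈ ℤ, i ∈ ℕ. -/
noncomputable def binom (n : ℤ) (i : ℕ) : ℂ :=
  (∏ j ∈ Finset.range i, ((n : ℂ) - (j : ℂ))) / (i.factorial : ℂ)

/-- Coefficient of x₀ᵃx₁ᵇx₂ᶜ in x₀⁻¹δ((x₁-x₂)/x₀). -/
noncomputable def T1 (a b c : ℤ) : ℂ :=
  if 0 ≤ c ∧ a + b + c = -1 then
    (-1 : ℂ) ^ c.toNat * binom (-a - 1) c.toNat else 0

/-- Coefficient of x₀ᵃx₁ᵇx₂ᶜ in x₀⁻¹δ((x₂-x₁)/(-x₀)). -/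
noncomputable def T2 (a b c : ℤ) : ℂ :=
  if 0 ≤ b ∧ a + b + c = -1 then
    (-1 : ℂ) ^ ((a + 1).natAbs) * (-1 : ℂ) ^ b.toNat * binom (-a - 1) b.toNat
  else 0

/-- Coefficient of x₀ᵃx₁ᵇx₂ᶜ in x₂⁻¹δ((x₁-x₀)/x₂). -/
noncomputable def T3 (a b c : ℤ) : ℂ :=
  if 0 ≤ a ∧ a + b + c = -1 then
    (-1 : ℂ) ^ a.toNat * binom (-c - 1) a.toNat else 0

/-! The three coefficients vanish off the plane `a + b + c = -1`. On it, with `n = -a - 1 = b + c`: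
if `a < 0` then `n ≥ 0` and the first two terms are `(-1)^c C(n, c)` and `(-1)^c C(n, b)`, equal by
the symmetry of ordinary binomial coefficients (both vanish when `b` or `c` is negative). If `a ≥ 0`,
upper negation `C(-m-1, k) = (-1)^k C(m+k, k)` turns every surviving term into an ordinary binomial
coefficient, and the identity again reduces to symmetry, or to `C(m, a) = 0` for `0 ≤ m < a`. -/

theorem binom_eq_choose (n : ℤ) (i : ℕ) : binom n i = Ring.choose (n : ℂ) i := by
  rw [Ring.choose_eq_smul, smul_eq_mul, ← Polynomial.aeval_eq_smeval, Polynomial.aeval_def,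
    ← Polynomial.eval_map, descPochhammer_map, descPochhammer_eval_eq_prod_range, binom,
    div_eq_inv_mul]

theorem binom_natCast (m k : ℕ) : binom m k = m.choose k := by
  rw [binom_eq_choose, Int.cast_natCast, Ring.choose_natCast]

theorem binom_natCast_of_lt {m k : ℕ} (h : m < k) : binom m k = 0 := by
  rw [binom_natCast, Nat.choose_eq_zero_of_lt h, Nat.cast_zero]

theorem neg_one_pow_mul_binom_neg_sub_one (m k : ℕ) :
    (-1 : ℂ) ^ k * binom (-m - 1) k = (m + k).choose k := by
  have h : ((-(m : ℤ) - 1 : ℤ) : ℂ) = -((m + 1 : ℕ) : ℂ) := by push_cast; ring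
  rw [binom_eq_choose, h, Ring.choose_neg, Units.smul_def, zsmul_eq_mul, Int.cast_negOnePow_natCast]
  have hk : (((m + 1 : ℕ) : ℂ) + k - 1) = ((m + k : ℕ) : ℂ) := by push_cast; ring
  rw [hk, Ring.choose_natCast, ← mul_assoc, ← mul_pow, neg_one_mul, neg_neg, one_pow, one_mul]

theorem T1_eq_T2_of_neg {a b c : ℤ} (hs : a + b + c = -1) (ha : a < 0) :
    T1 a b c = T2 a b c := by
  obtain ⟨n, rfl⟩ : ∃ n : ℕ, a = -n - 1 := ⟨(-a - 1).toNat, by omega⟩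
  have hn : -(-(n : ℤ) - 1) - 1 = n := by ring
  have habs : (-(n : ℤ) - 1 + 1).natAbs = n := by omega
  simp only [T1, T2, hs, and_true, hn, habs]
  rcases lt_or_ge b 0 with hb | hb
  · lift c to ℕ using (by omega)
    rw [if_pos (by omega), if_neg (by omega), Int.toNat_natCast,
      binom_natCast_of_lt (by omega), mul_zero]
  rcases lt_or_ge c 0 with hc | hc
  · lift b to ℕ using hb
    rw [if_neg (by omega), if_pos (by omega), Int.toNat_natCast,
      binom_natCast_of_lt (by omega), mul_zero]
  lift b to ℕ using hb
  lift c to ℕ using hc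
  obtain rfl : n = b + c := by omega
  rw [if_pos (by omega), if_pos (by omega), Int.toNat_natCast, Int.toNat_natCast,
    binom_natCast, binom_natCast, Nat.choose_symm_add, pow_add,
    mul_right_comm ((-1 : ℂ) ^ b), ← mul_pow, neg_one_mul, neg_neg, one_pow, one_mul]

theorem T1_sub_T2_of_nonneg {a b c : ℤ} (hs : a + b + c = -1) (ha : 0 ≤ a) :
    T1 a b c - T2 a b c = T3 a b c := by
  lift a to ℕ using ha
  simp only [T1, T2, T3, hs, and_true, if_pos (Int.natCast_nonneg a), Int.toNat_natCast]
  rcases le_or_gt 0 c with hc | hc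
  · lift c to ℕ using hc
    rw [if_pos (by omega), if_neg (by omega), Int.toNat_natCast, sub_zero,
      neg_one_pow_mul_binom_neg_sub_one, neg_one_pow_mul_binom_neg_sub_one, add_comm c,
      Nat.choose_symm_add]
  rw [if_neg (by omega), zero_sub]
  obtain ⟨m, hm⟩ : ∃ m : ℕ, -c - 1 = m := ⟨(-c - 1).toNat, by omega⟩
  rw [hm]
  rcases lt_or_ge b 0 with hb | hb
  · rw [if_neg (by omega), binom_natCast_of_lt (by omega), neg_zero, mul_zero]
  lift b to ℕ using hb
  obtain rfl : m = a + b := by omega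
  have habs : ((a : ℤ) + 1).natAbs = a + 1 := by omega
  rw [if_pos (by omega), Int.toNat_natCast, habs, mul_assoc, neg_one_pow_mul_binom_neg_sub_one,
    binom_natCast, Nat.choose_symm_add, pow_succ]
  ring

theorem three_term_delta_identity (a b c : ℤ) :
    T1 a b c - T2 a b c = T3 a b c := by
  by_cases hs : a + b + c = -1
  · rcases lt_or_ge a 0 with ha | ha
    · rw [T1_eq_T2_of_neg hs ha, sub_self, T3, if_neg (by omega)]
    · exact T1_sub_T2_of_nonneg hs ha
  · simp [T1, T2, T3, hs]

end Stmt15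
end
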